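/- For a connected graph Σ and two distinct edges α = {x,u}, β = {y,v} ∈ E(Σ), the distance in the subdivision graph S(Σ) between α and β equals 2·min{d_Σ(x,y), d_Σ(x,v), d_Σ(y,u), d_Σ(u,v)} + 2. -/

import Mathlib

open SimpleGraph

/-- The subdivision graph of a simple graph `S`: vertex set `V ⊕ E(S)`,
with `x ∈ V` adjacent to `e ∈ E(S)` iff `x ∈ e`. -/
def subdiv {V : Type*} (S : SimpleGraph V) : SimpleGraph (V ⊕ S.edgeSet) where
  Adj a b :=
    (∃ (x : V) (e : S.edgeSet), a = Sum.inl x ∧ b = Sum.inr e ∧ x ∈ (e : Sym2 V)) ∨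
    (∃ (x : V) (e : S.edgeSet), b = Sum.inl x ∧ a = Sum.inr e ∧ x ∈ (e : Sym2 V))
  symm := ⟨fun a b h => h.elim (fun ⟨x, e, h1, h2, h3⟩ => Or.inr ⟨x, e, h1, h2, h3⟩)
    (fun ⟨x, e, h1, h2, h3⟩ => Or.inl ⟨x, e, h1, h2, h3⟩)⟩
  loopless := by
    constructor
    rintro a (⟨x, e, h1, h2, _⟩ | ⟨x, e, h1, h2, _⟩) <;> rw [h1] at h2 <;>
      exact Sum.inl_ne_inr h2

lemma walk_ge {V : Type*} (S : SimpleGraph V) (hconn : S.Connected) :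
    ∀ (n : ℕ) (a b : V) (W : (subdiv S).Walk (Sum.inl a) (Sum.inl b)), W.length = n →
      2 * S.dist a b ≤ n := by
  intro n
  induction n using Nat.strong_induction_on with
  | _ n ih =>
    intro a b W hW
    cases W with
    | nil =>
      have : S.dist a a = 0 := S.dist_self
      omega
    | cons h p =>
      rcases h with ⟨a', e, h1, h2, hmem⟩ | ⟨a', e, h1, h2, hmem⟩
      swap
      · exact absurd h2 (by simp)
      rw [Sum.inl.injEq] at h1
      subst h2
      rw [← h1] at hmem
      change p.length + 1 = n at hW
      cases p with
      | cons h' q =>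
        rcases h' with ⟨c, e', hc1, hc2, hcmem⟩ | ⟨c, e', hc1, hc2, hcmem⟩
        · exact absurd hc1 (by simp)
        · rw [Sum.inr.injEq] at hc2
          subst hc1
          rw [← hc2] at hcmem
          change q.length + 1 + 1 = n at hW
          have hq : 2 * S.dist c b ≤ q.length := ih q.length (by omega) c b q rfl
          have hac : S.dist a c ≤ 1 := by
            rcases eq_or_ne a c with rfl | hne
            · simp [S.dist_self]
            · have he : (e : Sym2 V) = s(a, c) :=
                ((Sym2.mem_and_mem_iff hne).mp ⟨hmem, hcmem⟩)
              have hadj : S.Adj a c := S.mem_edgeSet.mp (he ▸ e.2)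
              exact S.dist_le (Walk.cons hadj Walk.nil)
          have := hconn.dist_triangle (u := a) (v := c) (w := b)
          omega

lemma liftWalk {V : Type*} (S : SimpleGraph V) {a b : V} (P : S.Walk a b) :
    ∃ W : (subdiv S).Walk (Sum.inl a) (Sum.inl b), W.length = 2 * P.length := by
  induction P with
  | nil => exact ⟨.nil, rfl⟩
  | @cons a c b h p ih =>
    obtain ⟨W, hW⟩ := ih
    refine ⟨.cons (Or.inl ⟨a, ⟨s(a,c), h⟩, rfl, rfl, Sym2.mem_mk_left _ _⟩)
      (.cons (Or.inr ⟨c, ⟨s(a,c), h⟩, rfl, rfl, Sym2.mem_mk_right _ _⟩) W), ?_⟩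
    show W.length + 1 + 1 = 2 * (p.length + 1)
    rw [hW]; ring

lemma upper_bd {V : Type*} (S : SimpleGraph V) (hconn : S.Connected) {a b : V}
    (α β : S.edgeSet) (ha : a ∈ (α : Sym2 V)) (hb : b ∈ (β : Sym2 V)) :
    (subdiv S).dist (Sum.inr α) (Sum.inr β) ≤ 2 * S.dist a b + 2 := by
  obtain ⟨P, hP⟩ := hconn.exists_walk_length_eq_dist a b
  obtain ⟨W, hW⟩ := liftWalk S P
  have h1 : (subdiv S).Adj (Sum.inr α) (Sum.inl a) := Or.inr ⟨a, α, rfl, rfl, ha⟩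
  have h2 : (subdiv S).Adj (Sum.inl b) (Sum.inr β) := Or.inl ⟨b, β, rfl, rfl, hb⟩
  have := (subdiv S).dist_le (Walk.cons h1 (W.append (Walk.cons h2 Walk.nil)))
  simp only [Walk.length_cons, Walk.length_append, Walk.length_nil, hW, hP] at this
  omega

lemma walk_inr_inl {V : Type*} (S : SimpleGraph V) (hconn : S.Connected)
    (β : S.edgeSet) (a : V) (W : (subdiv S).Walk (Sum.inr β) (Sum.inl a)) :
    ∃ b ∈ (β : Sym2 V), 2 * S.dist b a + 1 ≤ W.length := by
  cases W with
  | cons h' q =>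
    rcases h' with ⟨b, f, hb1, hb2, hbmem⟩ | ⟨b, f, hb1, hb2, hbmem⟩
    · exact absurd hb1 (by simp)
    · rw [Sum.inr.injEq] at hb2
      subst hb1
      rw [← hb2] at hbmem
      have hge := walk_ge S hconn q.length b a q rfl
      exact ⟨b, hbmem, by show _ ≤ q.length + 1; omega⟩

/-- For distinct edges `{x,u}` and `{y,v}` of a connected graph `S`, their distance in the
subdivision graph is `2 * min {d(x,y), d(x,v), d(y,u), d(u,v)} + 2`. -/
theorem stmt_4 {V : Type*} (S : SimpleGraph V) (hconn : S.Connected) (x u y v : V)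
    (hxu : S.Adj x u) (hyv : S.Adj y v)
    (hne : s(x, u) ≠ s(y, v)) :
    (subdiv S).dist (Sum.inr ⟨s(x, u), (S.mem_edgeSet).mpr hxu⟩)
        (Sum.inr ⟨s(y, v), (S.mem_edgeSet).mpr hyv⟩) =
      2 * min (min (S.dist x y) (S.dist x v)) (min (S.dist y u) (S.dist u v)) + 2 := by
  set α : S.edgeSet := ⟨s(x, u), (S.mem_edgeSet).mpr hxu⟩ with hα
  set β : S.edgeSet := ⟨s(y, v), (S.mem_edgeSet).mpr hyv⟩ with hβ
  have hxα : x ∈ (α : Sym2 V) := Sym2.mem_mk_left _ _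
  have huα : u ∈ (α : Sym2 V) := Sym2.mem_mk_right _ _
  have hyβ : y ∈ (β : Sym2 V) := Sym2.mem_mk_left _ _
  have hvβ : v ∈ (β : Sym2 V) := Sym2.mem_mk_right _ _
  have hU1 := upper_bd S hconn α β hxα hyβ
  have hU2 := upper_bd S hconn α β hxα hvβ
  have hU3 := upper_bd S hconn α β huα hyβ
  have hU4 := upper_bd S hconn α β huα hvβ
  have hcomm : S.dist u y = S.dist y u := S.dist_comm
  -- lower bound
  have hneαβ : (Sum.inr α : V ⊕ S.edgeSet) ≠ Sum.inr β := by
    simp [hα, hβ, Subtype.ext_iff, hne]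
  have hreach : (subdiv S).Reachable (Sum.inr α) (Sum.inr β) := by
    obtain ⟨P, hP⟩ := hconn.exists_walk_length_eq_dist x y
    obtain ⟨W, hW⟩ := liftWalk S P
    exact ⟨Walk.cons (Or.inr ⟨x, α, rfl, rfl, hxα⟩)
      (W.append (Walk.cons (Or.inl ⟨y, β, rfl, rfl, hyβ⟩) Walk.nil))⟩
  clear_value α β
  obtain ⟨W, hW⟩ := hreach.exists_walk_length_eq_dist
  have hL : ∃ a b, a ∈ (α : Sym2 V) ∧ b ∈ (β : Sym2 V) ∧
      2 * S.dist a b + 2 ≤ (subdiv S).dist (Sum.inr α) (Sum.inr β) := by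
    cases W with
    | nil => exact absurd rfl hneαβ
    | cons h p =>
      rcases h with ⟨a, e, h1, h2, hmem⟩ | ⟨a, e, h1, h2, hmem⟩
      · exact absurd h1 (by simp)
      · rw [Sum.inr.injEq] at h2
        subst h1
        rw [← h2] at hmem
        obtain ⟨b, hbmem, hge⟩ := walk_inr_inl S hconn β a p.reverse
        rw [p.length_reverse] at hge
        refine ⟨a, b, hmem, hbmem, ?_⟩
        have hdcomm : S.dist b a = S.dist a b := S.dist_comm
        change p.length + 1 = _ at hW
        omega
  obtain ⟨a, b, hma, hmb, hL⟩ := hL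
  rw [hα] at hma; rw [hβ] at hmb
  simp only [Sym2.mem_iff] at hma hmb
  rcases hma with rfl | rfl <;> rcases hmb with rfl | rfl <;> omega
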